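/- arXiv:2208.09101 — 4 statements merged into one kernel-verified Lean document; each statement's English description precedes it below -/
import Mathlib

section
/- Let (ι, A, I, z, x) be a GI datum, (ι', A, I, z', x') a Kramers–Wannier dual datum for it, m ≥ 2 an integer, and Q the periodic bulk qubit type. For all a, b : Q → ZMod 2, if the operator X_a Z_b commutes with every operator in the periodic bulk stabilizer set, then there exist ε ∈ {1, −1} and a finite list of operators from the periodic bulk stabilizer set whose product equals ε · X_a Z_b. -/
/-!
Every operator in the stabilizer set is a pure `X_u` or a pure `Z_v`, so `X_a Z_b` commutes with
all of them iff `b` is orthogonal to the X-supports and `a` to the Z-supports. It is enough to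
show that a vector orthogonal to the X-supports lies in the span of the Z-supports: over `𝔽₂^Q`
double orthogonality then gives the same statement with X and Z exchanged, and `X_a`, `Z_b` are
products of stabilizers (with `ε = 1`).

For `b` orthogonal to the X-supports, every even layer of `b` lies in the span of the `z' α`.
Adding Z-suspensions whose coefficients form a cyclic antidifference of these layers clears all
even layers but layer `0`, and preserves orthogonality to the X-supports, since Z-suspensions
are themselves orthogonal to them (this is where the duality `z·x = z'·x'` enters). The
X-suspension relations then say that the pairings of the odd layers with each `x i` do not
depend on the layer, and that layer `0` is orthogonal to the `x' i`. One more layer-independent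
Z-suspension makes every odd layer orthogonal to all `x i`, after which `b` splits layer by
layer into Z-supports.
-/

noncomputable section

/-- The `ZMod 2`-valued dot product `u·v = ∑ j, u j * v j`. -/
def dotp {ι : Type} [Fintype ι] (u v : ι → ZMod 2) : ZMod 2 := ∑ j, u j * v j

/-- The X-type Pauli operator `X_u`: the permutation matrix with
`(X_u)_{s,t} = 1` iff `s = t + u`. -/
def Xop {ι : Type} [Fintype ι] (u : ι → ZMod 2) :
    Matrix (ι → ZMod 2) (ι → ZMod 2) ℂ :=
  Matrix.of fun s t => if s = t + u then 1 else 0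

/-- The Z-type Pauli operator `Z_v`: the diagonal matrix with
`(Z_v)_{s,s} = (-1)^(v·s)`. -/
def Zop {ι : Type} [Fintype ι] (v : ι → ZMod 2) :
    Matrix (ι → ZMod 2) (ι → ZMod 2) ℂ :=
  Matrix.of fun s t => if s = t then (-1 : ℂ) ^ (dotp v s).val else 0

/-- The standard inner product on the `ι`-qubit Hilbert space `(ι → ZMod 2) → ℂ`. -/
def qInner {ι : Type} [Fintype ι] [DecidableEq ι] (ψ φ : (ι → ZMod 2) → ℂ) : ℂ :=
  ∑ s, (starRingEnd ℂ) (ψ s) * φ s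

/-- The subspace of vectors fixed by every operator in a given set of matrices. -/
def fixedSpace {ι : Type} [Fintype ι] [DecidableEq ι]
    (Ms : Set (Matrix (ι → ZMod 2) (ι → ZMod 2) ℂ)) :
    Submodule ℂ ((ι → ZMod 2) → ℂ) :=
  ⨅ M ∈ Ms, LinearMap.ker (Matrix.mulVecLin M - LinearMap.id)
/-- The periodic bulk qubit type: `m` odd layers (copies of `ι`) and `m` even layers
(copies of `ι'`), cyclically arranged (odd layer `l` between even layers `l` and `l+1`). -/
abbrev BulkQ (m : ℕ) (ι ι' : Type) : Type := (ZMod m × ι) ⊕ (ZMod m × ι')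

/-- `w@o_l`: the vector equal to `w` on odd layer `l` and `0` elsewhere. -/
def atOdd {m : ℕ} {ι ι' : Type} (l : ZMod m) (w : ι → ZMod 2) : BulkQ m ι ι' → ZMod 2
  | Sum.inl p => if p.1 = l then w p.2 else 0
  | Sum.inr _ => 0

/-- `w'@e_l`: the vector equal to `w'` on even layer `l` and `0` elsewhere. -/
def atEven {m : ℕ} {ι ι' : Type} (l : ZMod m) (w' : ι' → ZMod 2) : BulkQ m ι ι' → ZMod 2
  | Sum.inl _ => 0
  | Sum.inr p => if p.1 = l then w' p.2 else 0

/-- The periodic bulk stabilizer set: Z-suspension operators, X-suspension operators,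
and the layer-wise local/compatible symmetry operators of the GI datum and its dual. -/
def periodicBulkSet (m : ℕ) [NeZero m] (ι ι' A I : Type)
    [Fintype ι] [DecidableEq ι] [Fintype ι'] [DecidableEq ι'] [Fintype A] [Fintype I]
    (z : A → ι → ZMod 2) (x : I → ι → ZMod 2)
    (z' : A → ι' → ZMod 2) (x' : I → ι' → ZMod 2) :
    Set (Matrix (BulkQ m ι ι' → ZMod 2) (BulkQ m ι ι' → ZMod 2) ℂ) :=
  {M | (∃ (α : A) (l : ZMod m),
          M = Zop (atEven l (z' α) + atOdd l (z α) + atEven (l + 1) (z' α))) ∨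
       (∃ (i : I) (l : ZMod m),
          M = Xop (atOdd (l - 1) (x i) + atEven l (x' i) + atOdd l (x i))) ∨
       (∃ (l : ZMod m) (v : ι → ZMod 2),
          (∀ i, dotp v (x i) = 0) ∧ M = Zop (atOdd l v)) ∨
       (∃ (l : ZMod m) (u : ι → ZMod 2),
          (∀ α, dotp u (z α) = 0) ∧
          (∀ v : ι → ZMod 2, (∀ i, dotp v (x i) = 0) → dotp u v = 0) ∧
          M = Xop (atOdd l u)) ∨
       (∃ (l : ZMod m) (u' : ι' → ZMod 2),
          (∀ α, dotp u' (z' α) = 0) ∧ M = Xop (atEven l u')) ∨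
       (∃ (l : ZMod m) (v' : ι' → ZMod 2),
          v' ∈ Submodule.span (ZMod 2) (Set.range z') ∧
          (∀ i, dotp v' (x' i) = 0) ∧ M = Zop (atEven l v'))}

theorem ZMod.eq_zero_or_eq_one (c : ZMod 2) : c = 0 ∨ c = 1 := by
  revert c
  decide

theorem ZMod.val_sub_one_add_one {m : ℕ} [NeZero m] {k : ZMod m} (hk : k ≠ 0) :
    (k - 1).val + 1 = k.val := by
  have hpos : 1 ≤ k.val := Nat.one_le_iff_ne_zero.2 ((ZMod.val_ne_zero k).2 hk)
  have hk1 : k - 1 = ((k.val - 1 : ℕ) : ZMod m) := by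
    rw [Nat.cast_sub hpos, ZMod.natCast_zmod_val, Nat.cast_one]
  rw [hk1, ZMod.val_natCast, Nat.mod_eq_of_lt (by have := k.val_lt; omega)]
  omega

theorem ZMod.exists_antidifference {m : ℕ} [NeZero m] {G : Type*} [AddCommGroup G]
    (f : ZMod m → G) : ∃ D : ZMod m → G, ∀ k ≠ 0, f k = D k - D (k - 1) := by
  refine ⟨fun k => ∑ j ∈ Finset.range (k.val + 1), f j, fun k hk => ?_⟩
  dsimp only
  rw [← ZMod.val_sub_one_add_one hk, Finset.sum_range_succ, ZMod.val_sub_one_add_one hk,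
    ZMod.natCast_zmod_val, add_sub_cancel_left]

theorem ZMod.apply_eq_apply_zero {m : ℕ} [NeZero m] {X : Type*} {g : ZMod m → X}
    (h : ∀ k ≠ 0, g (k - 1) = g k) (l : ZMod m) : g l = g 0 := by
  induction hn : l.val generalizing l with
  | zero => rw [(ZMod.val_eq_zero l).1 hn]
  | succ n ih =>
    have hl : l ≠ 0 := (ZMod.val_ne_zero l).1 (by omega)
    rw [← h l hl, ih]
    have := ZMod.val_sub_one_add_one hl
    omega

open Matrix Submodule

section Orthogonality

variable {K n : Type*} [Field K] [Fintype n]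

theorem mem_span_of_forall_dotProduct_eq_zero {S : Set (n → K)} {a : n → K}
    (h : ∀ w, (∀ u ∈ S, w ⬝ᵥ u = 0) → w ⬝ᵥ a = 0) : a ∈ span K S := by
  classical
  rw [← Subspace.forall_mem_dualAnnihilator_apply_eq_zero_iff]
  intro φ hφ
  obtain ⟨w, rfl⟩ := (dotProductEquiv K n).surjective φ
  rw [mem_dualAnnihilator] at hφ
  exact h w fun u hu => hφ u (subset_span hu)

theorem dotProduct_eq_zero_of_mem_span {S : Set (n → K)} {a v : n → K}
    (ha : ∀ u ∈ S, a ⬝ᵥ u = 0) (hv : v ∈ span K S) : a ⬝ᵥ v = 0 := by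
  induction hv using span_induction with
  | mem u hu => exact ha u hu
  | zero => exact dotProduct_zero a
  | add u v _ _ hu hv => rw [dotProduct_add, hu, hv, add_zero]
  | smul c u _ hu => rw [dotProduct_smul, hu, smul_zero]

theorem mem_span_of_orthogonal_subset_span {S T : Set (n → K)}
    (hST : ∀ w, (∀ u ∈ S, w ⬝ᵥ u = 0) → w ∈ span K T) {a : n → K}
    (ha : ∀ v ∈ T, a ⬝ᵥ v = 0) : a ∈ span K S :=
  mem_span_of_forall_dotProduct_eq_zero fun w hw => by
    rw [dotProduct_comm]
    exact dotProduct_eq_zero_of_mem_span ha (hST w hw)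

theorem vecMul_dotProduct_eq_zero {κ : Type*} [Fintype κ] {M : Matrix κ n K} {w : n → K}
    (hw : ∀ k, w ⬝ᵥ M k = 0) (c : κ → K) : c ᵥ* M ⬝ᵥ w = 0 := by
  rw [← dotProduct_mulVec, show M *ᵥ w = 0 from funext fun k => (dotProduct_comm _ _).trans (hw k),
    dotProduct_zero]

theorem exists_vecMul_eq_of_forall_dotProduct_eq_zero {κ : Type*} [Fintype κ]
    (M : Matrix κ n K) {y : n → K} (h : ∀ w, (∀ k, w ⬝ᵥ M k = 0) → w ⬝ᵥ y = 0) :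
    ∃ c, c ᵥ* M = y := by
  have hy : y ∈ span K (Set.range M) :=
    mem_span_of_forall_dotProduct_eq_zero fun w hw => h w fun k => hw _ ⟨k, rfl⟩
  obtain ⟨c, hc⟩ := (mem_span_range_iff_exists_fun K).1 hy
  exact ⟨c, by rw [vecMul_eq_sum, hc]⟩

end Orthogonality

theorem mem_closure_image_of_mem_span {V M : Type*} [AddCommGroup V] [Module (ZMod 2) V]
    [Monoid M] (f : V → M) (h0 : f 0 = 1) (hadd : ∀ u v, f (u + v) = f u * f v)
    {T : Set V} {u : V} (hu : u ∈ span (ZMod 2) T) : f u ∈ Submonoid.closure (f '' T) := by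
  induction hu using span_induction with
  | mem u hu => exact Submonoid.subset_closure (Set.mem_image_of_mem f hu)
  | zero => exact h0 ▸ (Submonoid.closure (f '' T)).one_mem
  | add u v _ _ hu hv => exact hadd u v ▸ mul_mem hu hv
  | smul c u _ hu =>
    obtain rfl | rfl := ZMod.eq_zero_or_eq_one c
    · rw [zero_smul, h0]
      exact one_mem _
    · rwa [one_smul]

section Pauli

variable {n : Type} [Fintype n]

theorem neg_one_pow_val_add (a b : ZMod 2) :
    (-1 : ℂ) ^ (a + b).val = (-1) ^ a.val * (-1) ^ b.val := by
  rw [ZMod.val_add, ← neg_one_pow_eq_pow_mod_two, pow_add]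

theorem eq_zero_of_neg_one_pow_val_eq_one {d : ZMod 2} (h : (-1 : ℂ) ^ d.val = 1) : d = 0 := by
  obtain rfl | rfl := ZMod.eq_zero_or_eq_one d
  · rfl
  · norm_num [show (1 : ZMod 2).val = 1 from rfl] at h

theorem Zop_eq_diagonal (v : n → ZMod 2) :
    Zop v = diagonal fun s => (-1 : ℂ) ^ (v ⬝ᵥ s).val := rfl

theorem Xop_zero : Xop (0 : n → ZMod 2) = 1 := by
  ext s t
  simp [Xop, one_apply]

theorem Zop_zero : Zop (0 : n → ZMod 2) = 1 := by
  simp [Zop_eq_diagonal]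

theorem Xop_add [DecidableEq n] (u v : n → ZMod 2) : Xop (u + v) = Xop u * Xop v := by
  ext s t
  simp [Xop, mul_apply, ← add_assoc, add_right_comm t v u]

theorem Zop_add [DecidableEq n] (u v : n → ZMod 2) : Zop (u + v) = Zop u * Zop v := by
  simp only [Zop_eq_diagonal, diagonal_mul_diagonal, add_dotProduct, neg_one_pow_val_add]

theorem Zop_mul_Xop [DecidableEq n] (v u : n → ZMod 2) :
    Zop v * Xop u = (-1 : ℂ) ^ (v ⬝ᵥ u).val • (Xop u * Zop v) := by
  ext s t
  rw [Matrix.smul_apply, Zop_eq_diagonal, diagonal_mul, mul_diagonal]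
  simp only [Xop, of_apply, smul_eq_mul]
  split_ifs with h
  · rw [h, dotProduct_add, neg_one_pow_val_add]
    ring
  · simp

theorem isUnit_Xop [DecidableEq n] (u : n → ZMod 2) : IsUnit (Xop u) :=
  .of_mul_eq_one (Xop u) (by rw [← Xop_add, ZModModule.add_self, Xop_zero])

theorem isUnit_Zop [DecidableEq n] (v : n → ZMod 2) : IsUnit (Zop v) :=
  .of_mul_eq_one (Zop v) (by rw [← Zop_add, ZModModule.add_self, Zop_zero])

theorem eq_one_of_smul_eq_self {N : Type*} [Fintype N] [DecidableEq N] [Nonempty N] {c : ℂ}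
    {P : Matrix N N ℂ} (hP : IsUnit P) (h : c • P = P) : c = 1 := by
  obtain ⟨Q, hQ⟩ := hP.exists_right_inv
  have h1 : c • (1 : Matrix N N ℂ) = 1 := by
    rw [← hQ, ← smul_mul_assoc, h]
  let s : N := Classical.arbitrary N
  simpa using congrFun (congrFun h1 s) s

theorem dotProduct_eq_zero_of_commute_Xop [DecidableEq n] {a b u : n → ZMod 2}
    (h : Xop a * Zop b * Xop u = Xop u * (Xop a * Zop b)) : b ⬝ᵥ u = 0 := by
  rw [mul_assoc, Zop_mul_Xop, mul_smul_comm, ← mul_assoc, ← Xop_add, add_comm, Xop_add,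
    mul_assoc] at h
  refine eq_zero_of_neg_one_pow_val_eq_one (eq_one_of_smul_eq_self ?_ h)
  exact (isUnit_Xop u).mul ((isUnit_Xop a).mul (isUnit_Zop b))

theorem dotProduct_eq_zero_of_commute_Zop [DecidableEq n] {a b v : n → ZMod 2}
    (h : Xop a * Zop b * Zop v = Zop v * (Xop a * Zop b)) : a ⬝ᵥ v = 0 := by
  rw [← mul_assoc, Zop_mul_Xop, smul_mul_assoc, mul_assoc, ← Zop_add, add_comm, Zop_add,
    ← mul_assoc] at h
  rw [dotProduct_comm]
  refine eq_zero_of_neg_one_pow_val_eq_one (eq_one_of_smul_eq_self ?_ h.symm)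
  exact ((isUnit_Xop a).mul (isUnit_Zop v)).mul (isUnit_Zop b)

end Pauli

section Layers

variable {m : ℕ} {ι ι' : Type}

def oddLayer (l : ZMod m) : (BulkQ m ι ι' → ZMod 2) →ₗ[ZMod 2] ι → ZMod 2 :=
  LinearMap.funLeft (ZMod 2) (ZMod 2) fun j => Sum.inl (l, j)

def evenLayer (l : ZMod m) : (BulkQ m ι ι' → ZMod 2) →ₗ[ZMod 2] ι' → ZMod 2 :=
  LinearMap.funLeft (ZMod 2) (ZMod 2) fun j => Sum.inr (l, j)

@[simp] theorem oddLayer_atOdd (k l : ZMod m) (w : ι → ZMod 2) :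
    oddLayer k (atOdd l w : BulkQ m ι ι' → ZMod 2) = if k = l then w else 0 := by
  ext j
  simp [oddLayer, atOdd, apply_ite (fun f : ι → ZMod 2 => f j)]

@[simp] theorem oddLayer_atEven (k l : ZMod m) (w : ι' → ZMod 2) :
    oddLayer k (atEven l w : BulkQ m ι ι' → ZMod 2) = 0 := rfl

@[simp] theorem evenLayer_atEven (k l : ZMod m) (w : ι' → ZMod 2) :
    evenLayer k (atEven l w : BulkQ m ι ι' → ZMod 2) = if k = l then w else 0 := by
  ext j
  simp [evenLayer, atEven, apply_ite (fun f : ι' → ZMod 2 => f j)]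

@[simp] theorem evenLayer_atOdd (k l : ZMod m) (w : ι → ZMod 2) :
    evenLayer k (atOdd l w : BulkQ m ι ι' → ZMod 2) = 0 := rfl

theorem atOdd_vecMul {A : Type} [Fintype A] (l : ZMod m) (c : A → ZMod 2)
    (M : Matrix A ι (ZMod 2)) :
    (atOdd l (c ᵥ* M) : BulkQ m ι ι' → ZMod 2) = ∑ α, c α • atOdd l (M α) := by
  ext (⟨k, j⟩ | _) <;> simp [atOdd, vecMul, dotProduct, Finset.sum_apply]

theorem atEven_vecMul {A : Type} [Fintype A] (l : ZMod m) (c : A → ZMod 2)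
    (M : Matrix A ι' (ZMod 2)) :
    (atEven l (c ᵥ* M) : BulkQ m ι ι' → ZMod 2) = ∑ α, c α • atEven l (M α) := by
  ext (_ | ⟨k, j⟩) <;> simp [atEven, vecMul, dotProduct, Finset.sum_apply]

variable [NeZero m]

theorem eq_sum_atOdd_add_sum_atEven (b : BulkQ m ι ι' → ZMod 2) :
    b = ∑ l, atOdd l (oddLayer l b) + ∑ l, atEven l (evenLayer l b) := by
  ext (⟨k, j⟩ | ⟨k, j⟩) <;> simp [atOdd, atEven, oddLayer, evenLayer, Finset.sum_apply]

variable [Fintype ι] [Fintype ι']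

theorem dotProduct_atOdd (b : BulkQ m ι ι' → ZMod 2) (l : ZMod m) (w : ι → ZMod 2) :
    b ⬝ᵥ atOdd l w = oddLayer l b ⬝ᵥ w := by
  simp [dotProduct, Fintype.sum_sum_type, Fintype.sum_prod_type, atOdd, oddLayer]

theorem dotProduct_atEven (b : BulkQ m ι ι' → ZMod 2) (l : ZMod m) (w : ι' → ZMod 2) :
    b ⬝ᵥ atEven l w = evenLayer l b ⬝ᵥ w := by
  simp [dotProduct, Fintype.sum_sum_type, Fintype.sum_prod_type, atEven, evenLayer]

end Layers

section BulkVectors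

variable {ι ι' A I : Type} (m : ℕ) (z : Matrix A ι (ZMod 2)) (x : Matrix I ι (ZMod 2))
  (z' : Matrix A ι' (ZMod 2)) (x' : Matrix I ι' (ZMod 2))

def bulkXVectors [Fintype ι] [Fintype ι'] : Set (BulkQ m ι ι' → ZMod 2) :=
  {u | (∃ (i : I) (l : ZMod m), u = atOdd (l - 1) (x i) + atEven l (x' i) + atOdd l (x i)) ∨
       (∃ (l : ZMod m) (w : ι → ZMod 2), (∀ α, w ⬝ᵥ z α = 0) ∧
          (∀ v : ι → ZMod 2, (∀ i, v ⬝ᵥ x i = 0) → w ⬝ᵥ v = 0) ∧ u = atOdd l w) ∨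
       (∃ (l : ZMod m) (w' : ι' → ZMod 2), (∀ α, w' ⬝ᵥ z' α = 0) ∧ u = atEven l w')}

def bulkZVectors [Fintype ι] [Fintype ι'] : Set (BulkQ m ι ι' → ZMod 2) :=
  {v | (∃ (α : A) (l : ZMod m), v = atEven l (z' α) + atOdd l (z α) + atEven (l + 1) (z' α)) ∨
       (∃ (l : ZMod m) (w : ι → ZMod 2), (∀ i, w ⬝ᵥ x i = 0) ∧ v = atOdd l w) ∨
       (∃ (l : ZMod m) (w' : ι' → ZMod 2), w' ∈ span (ZMod 2) (Set.range z') ∧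
          (∀ i, w' ⬝ᵥ x' i = 0) ∧ v = atEven l w')}

variable {m z x z' x'} [NeZero m] [Fintype ι] [DecidableEq ι] [Fintype ι'] [DecidableEq ι']
  [Fintype A] [Fintype I]

theorem Xop_mem_periodicBulkSet {u : BulkQ m ι ι' → ZMod 2} (hu : u ∈ bulkXVectors m z x z' x') :
    Xop u ∈ periodicBulkSet m ι ι' A I z x z' x' := by
  rcases hu with ⟨i, l, rfl⟩ | ⟨l, w, hz, hx, rfl⟩ | ⟨l, w', hz', rfl⟩
  exacts [Or.inr (Or.inl ⟨i, l, rfl⟩), Or.inr (Or.inr (Or.inr (Or.inl ⟨l, w, hz, hx, rfl⟩))),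
    Or.inr (Or.inr (Or.inr (Or.inr (Or.inl ⟨l, w', hz', rfl⟩))))]

theorem Zop_mem_periodicBulkSet {v : BulkQ m ι ι' → ZMod 2} (hv : v ∈ bulkZVectors m z x z' x') :
    Zop v ∈ periodicBulkSet m ι ι' A I z x z' x' := by
  rcases hv with ⟨α, l, rfl⟩ | ⟨l, w, hx, rfl⟩ | ⟨l, w', hz', hx', rfl⟩
  exacts [Or.inl ⟨α, l, rfl⟩, Or.inr (Or.inr (Or.inl ⟨l, w, hx, rfl⟩)),
    Or.inr (Or.inr (Or.inr (Or.inr (Or.inr ⟨l, w', hz', hx', rfl⟩))))]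

end BulkVectors

section Suspension

variable {m : ℕ} [NeZero m] {ι ι' A : Type} [Fintype A] (z : Matrix A ι (ZMod 2))
  (z' : Matrix A ι' (ZMod 2))

def zSuspension (D : ZMod m → A → ZMod 2) : BulkQ m ι ι' → ZMod 2 :=
  ∑ l, (atEven l (D l ᵥ* z') + atOdd l (D l ᵥ* z) + atEven (l + 1) (D l ᵥ* z'))

@[simp] theorem oddLayer_zSuspension (D : ZMod m → A → ZMod 2) (k : ZMod m) :
    oddLayer k (zSuspension z z' D) = D k ᵥ* z := by
  simp [zSuspension]

@[simp] theorem evenLayer_zSuspension (D : ZMod m → A → ZMod 2) (k : ZMod m) :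
    evenLayer k (zSuspension z z' D) = D k ᵥ* z' + D (k - 1) ᵥ* z' := by
  simp [zSuspension, Finset.sum_add_distrib, ← sub_eq_iff_eq_add]

end Suspension

section ZSide

variable {m : ℕ} [NeZero m] {ι ι' A I : Type} [Fintype ι] [Fintype ι']
  {z : Matrix A ι (ZMod 2)} {x : Matrix I ι (ZMod 2)} {z' : Matrix A ι' (ZMod 2)}
  {x' : Matrix I ι' (ZMod 2)} {b : BulkQ m ι ι' → ZMod 2}

theorem evenLayer_mem_span_of_orthogonal (hb : ∀ u ∈ bulkXVectors m z x z' x', b ⬝ᵥ u = 0)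
    (l : ZMod m) : evenLayer l b ∈ span (ZMod 2) (Set.range z') :=
  mem_span_of_forall_dotProduct_eq_zero fun w hw => by
    rw [dotProduct_comm, ← dotProduct_atEven]
    exact hb _ (Or.inr (Or.inr ⟨l, w, fun α => hw _ ⟨α, rfl⟩, rfl⟩))

theorem mem_span_bulkZVectors_of_layers (hodd : ∀ l i, oddLayer l b ⬝ᵥ x i = 0)
    (heven : ∀ l, evenLayer l b ∈ span (ZMod 2) (Set.range z'))
    (heven' : ∀ l i, evenLayer l b ⬝ᵥ x' i = 0) :
    b ∈ span (ZMod 2) (bulkZVectors m z x z' x') := by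
  rw [eq_sum_atOdd_add_sum_atEven b]
  exact add_mem (sum_mem fun l _ => subset_span (Or.inr (Or.inl ⟨l, _, hodd l, rfl⟩)))
    (sum_mem fun l _ => subset_span (Or.inr (Or.inr ⟨l, _, heven l, heven' l, rfl⟩)))

variable [Fintype A]

theorem zSuspension_mem_span (D : ZMod m → A → ZMod 2) :
    zSuspension z z' D ∈ span (ZMod 2) (bulkZVectors m z x z' x') := by
  refine sum_mem fun l _ => ?_
  rw [atEven_vecMul, atOdd_vecMul, atEven_vecMul, ← Finset.sum_add_distrib,
    ← Finset.sum_add_distrib]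
  refine sum_mem fun α _ => ?_
  rw [← smul_add, ← smul_add]
  exact smul_mem _ _ (subset_span (Or.inl ⟨α, l, rfl⟩))

theorem zSuspension_dotProduct_eq_zero (hdual : ∀ α i, z α ⬝ᵥ x i = z' α ⬝ᵥ x' i)
    (D : ZMod m → A → ZMod 2) {u : BulkQ m ι ι' → ZMod 2} (hu : u ∈ bulkXVectors m z x z' x') :
    zSuspension z z' D ⬝ᵥ u = 0 := by
  have hdual' : ∀ (c : A → ZMod 2) i, c ᵥ* z ⬝ᵥ x i = c ᵥ* z' ⬝ᵥ x' i := fun c i => by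
    rw [← dotProduct_mulVec, ← dotProduct_mulVec]
    exact congrArg _ (funext fun α => hdual α i)
  rcases hu with ⟨i, l, rfl⟩ | ⟨l, w, hz, -, rfl⟩ | ⟨l, w', hz', rfl⟩
  · simp only [dotProduct_add, dotProduct_atOdd, dotProduct_atEven, oddLayer_zSuspension,
      evenLayer_zSuspension, add_dotProduct, hdual']
    grind
  · rw [dotProduct_atOdd, oddLayer_zSuspension, vecMul_dotProduct_eq_zero hz]
  · rw [dotProduct_atEven, evenLayer_zSuspension, add_dotProduct, vecMul_dotProduct_eq_zero hz',
      vecMul_dotProduct_eq_zero hz', add_zero]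

variable [Fintype I]

theorem exists_vecMul_dotProduct_eq_oddLayer (hb : ∀ u ∈ bulkXVectors m z x z' x', b ⬝ᵥ u = 0)
    (l : ZMod m) : ∃ t : A → ZMod 2, ∀ i, t ᵥ* z ⬝ᵥ x i = oddLayer l b ⬝ᵥ x i := by
  -- the rows of `(x * zᵀ)ᵀ` are the vectors `x *ᵥ z α`
  obtain ⟨t, ht⟩ := exists_vecMul_eq_of_forall_dotProduct_eq_zero (x * zᵀ)ᵀ
    (y := x *ᵥ oddLayer l b) fun w hw => by
      rw [dotProduct_mulVec, dotProduct_comm, ← dotProduct_atOdd]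
      refine hb _ (Or.inr (Or.inl ⟨l, w ᵥ* x, fun α => ?_, fun v hv => ?_, rfl⟩))
      · exact (dotProduct_mulVec _ _ _).symm.trans (hw α)
      · exact vecMul_dotProduct_eq_zero hv w
  refine ⟨t, fun i => ?_⟩
  rw [vecMul_transpose, ← mulVec_mulVec, mulVec_transpose] at ht
  rw [dotProduct_comm, dotProduct_comm _ (x i)]
  exact congrFun ht i

theorem mem_span_bulkZVectors_of_evenLayer_eq_zero
    (hb : ∀ u ∈ bulkXVectors m z x z' x', b ⬝ᵥ u = 0) (h0 : ∀ k ≠ 0, evenLayer k b = 0) :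
    b ∈ span (ZMod 2) (bulkZVectors m z x z' x') := by
  have hrel : ∀ i l,
      oddLayer (l - 1) b ⬝ᵥ x i + evenLayer l b ⬝ᵥ x' i + oddLayer l b ⬝ᵥ x i = 0 :=
    fun i l => by
      rw [← dotProduct_atOdd, ← dotProduct_atEven, ← dotProduct_atOdd, ← dotProduct_add,
        ← dotProduct_add]
      exact hb _ (Or.inl ⟨i, l, rfl⟩)
  have hconst : ∀ i l, oddLayer l b ⬝ᵥ x i = oddLayer 0 b ⬝ᵥ x i := fun i =>
    ZMod.apply_eq_apply_zero fun k hk => by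
      have := hrel i k
      rwa [h0 k hk, zero_dotProduct, add_zero, CharTwo.add_eq_zero] at this
  have heven' : ∀ l i, evenLayer l b ⬝ᵥ x' i = 0 := fun l i => by
    by_cases hl : l = 0
    · subst hl
      have := hrel i 0
      rw [hconst i (0 - 1)] at this
      grind
    · rw [h0 l hl, zero_dotProduct]
  obtain ⟨t, ht⟩ := exists_vecMul_dotProduct_eq_oddLayer hb 0
  have hb₂ : b + zSuspension z z' (fun _ => t) ∈ span (ZMod 2) (bulkZVectors m z x z' x') := by
    refine mem_span_bulkZVectors_of_layers (fun l i => ?_) (fun l => ?_) (fun l i => ?_)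
    · rw [map_add, oddLayer_zSuspension, add_dotProduct, ht, hconst, ZModModule.add_self]
    · rw [map_add, evenLayer_zSuspension, ZModModule.add_self, add_zero]
      exact evenLayer_mem_span_of_orthogonal hb l
    · rw [map_add, evenLayer_zSuspension, ZModModule.add_self, add_zero]
      exact heven' l i
  exact (Submodule.add_mem_iff_left _ (zSuspension_mem_span _)).1 hb₂

theorem mem_span_bulkZVectors_of_orthogonal (hdual : ∀ α i, z α ⬝ᵥ x i = z' α ⬝ᵥ x' i)
    (hb : ∀ u ∈ bulkXVectors m z x z' x', b ⬝ᵥ u = 0) :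
    b ∈ span (ZMod 2) (bulkZVectors m z x z' x') := by
  have hc : ∀ l, ∃ c : A → ZMod 2, c ᵥ* z' = evenLayer l b := fun l => by
    obtain ⟨c, hc⟩ := (mem_span_range_iff_exists_fun _).1 (evenLayer_mem_span_of_orthogonal hb l)
    exact ⟨c, by rw [vecMul_eq_sum, hc]⟩
  choose c hc using hc
  obtain ⟨D, hD⟩ := ZMod.exists_antidifference c
  have hb₁ : b + zSuspension z z' D ∈ span (ZMod 2) (bulkZVectors m z x z' x') := by
    refine mem_span_bulkZVectors_of_evenLayer_eq_zero (fun u hu => ?_) fun k hk => ?_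
    · rw [add_dotProduct, hb u hu, zSuspension_dotProduct_eq_zero hdual D hu, add_zero]
    · rw [map_add, evenLayer_zSuspension, ← hc k, hD k hk, ZModModule.sub_eq_add, add_vecMul,
        ZModModule.add_self]
  exact (Submodule.add_mem_iff_left _ (zSuspension_mem_span _)).1 hb₁

end ZSide

theorem statement13_general (m : ℕ) [NeZero m] (ι ι' A I : Type)
    [Fintype ι] [DecidableEq ι] [Fintype ι'] [DecidableEq ι'] [Fintype A] [Fintype I]
    (z : A → ι → ZMod 2) (x : I → ι → ZMod 2)
    (z' : A → ι' → ZMod 2) (x' : I → ι' → ZMod 2)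
    (hdual : ∀ (α : A) (i : I), dotp (z α) (x i) = dotp (z' α) (x' i)) :
    ∀ a b : BulkQ m ι ι' → ZMod 2,
      (∀ M ∈ periodicBulkSet m ι ι' A I z x z' x',
        (Xop a * Zop b) * M = M * (Xop a * Zop b)) →
      ∃ ε : ℂ, (ε = 1 ∨ ε = -1) ∧
        ∃ L : List (Matrix (BulkQ m ι ι' → ZMod 2) (BulkQ m ι ι' → ZMod 2) ℂ),
          (∀ M ∈ L, M ∈ periodicBulkSet m ι ι' A I z x z' x') ∧
          L.prod = ε • (Xop a * Zop b) := by
  intro a b hcomm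
  have hZ : ∀ w, (∀ u ∈ bulkXVectors m z x z' x', w ⬝ᵥ u = 0) →
      w ∈ span (ZMod 2) (bulkZVectors m z x z' x') :=
    fun w => mem_span_bulkZVectors_of_orthogonal hdual
  have hb := hZ b fun u hu =>
    dotProduct_eq_zero_of_commute_Xop (hcomm _ (Xop_mem_periodicBulkSet hu))
  have ha : a ∈ span (ZMod 2) (bulkXVectors m z x z' x') :=
    mem_span_of_orthogonal_subset_span hZ fun v hv =>
      dotProduct_eq_zero_of_commute_Zop (hcomm _ (Zop_mem_periodicBulkSet hv))
  have hmem : Xop a * Zop b ∈ Submonoid.closure (periodicBulkSet m ι ι' A I z x z' x') :=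
    mul_mem
      (Submonoid.closure_mono (Set.image_subset_iff.2 fun _ => Xop_mem_periodicBulkSet)
        (mem_closure_image_of_mem_span Xop Xop_zero Xop_add ha))
      (Submonoid.closure_mono (Set.image_subset_iff.2 fun _ => Zop_mem_periodicBulkSet)
        (mem_closure_image_of_mem_span Zop Zop_zero Zop_add hb))
  obtain ⟨L, hL, hprod⟩ := Submonoid.exists_list_of_mem_closure hmem
  exact ⟨1, Or.inl rfl, L, hL, by rw [hprod, one_smul]⟩

/-- any Pauli operator `X_a Z_b` on the periodic bulk that commutes with
every operator in the periodic bulk stabilizer set equals, up to a sign `ε = ±1`, a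
finite product of operators from that set. -/
theorem statement13 (m : ℕ) [NeZero m] (hm : 2 ≤ m) (ι ι' A I : Type)
    [Fintype ι] [DecidableEq ι] [Fintype ι'] [DecidableEq ι'] [Fintype A] [Fintype I]
    (z : A → ι → ZMod 2) (x : I → ι → ZMod 2)
    (z' : A → ι' → ZMod 2) (x' : I → ι' → ZMod 2)
    (hdual : ∀ (α : A) (i : I), dotp (z α) (x i) = dotp (z' α) (x' i)) :
    ∀ a b : BulkQ m ι ι' → ZMod 2,
      (∀ M ∈ periodicBulkSet m ι ι' A I z x z' x',
        (Xop a * Zop b) * M = M * (Xop a * Zop b)) →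
      ∃ ε : ℂ, (ε = 1 ∨ ε = -1) ∧
        ∃ L : List (Matrix (BulkQ m ι ι' → ZMod 2) (BulkQ m ι ι' → ZMod 2) ℂ),
          (∀ M ∈ L, M ∈ periodicBulkSet m ι ι' A I z x z' x') ∧
          L.prod = ε • (Xop a * Zop b) :=
  statement13_general m ι ι' A I z x z' x' hdual
end
end

section
/- Let V be a nonzero finite-dimensional complex vector space and let H, U, W : V → V be linear maps such that U ∘ U = id, W is bijective, H ∘ U = U ∘ H, H ∘ W = W ∘ H, and U ∘ W = − W ∘ U. Then for every μ ∈ ℂ, the eigenspace ker(H − μ·id) has even dimension; in particular, if μ is an eigenvalue of H, its eigenspace has dimension at least 2. -/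
/-!
On the eigenspace `E` of `H` for `μ`, the restrictions of `U` and `W` are invertible and still
satisfy `U W = - W U`. Taking determinants on `E` gives
`det (U W) = (-1) ^ dim E * det (U W)` with `det (U W) ≠ 0`, so `dim E` is even.
-/

open Set

namespace Module.End

variable {K V : Type*} [Field K] [AddCommGroup V] [Module K V]

theorem even_finrank_of_mul_eq_neg_mul (hK : ringChar K ≠ 2) {T S : End K V}
    (hT : IsUnit T) (hS : IsUnit S) (h : T * S = -(S * T)) : Even (finrank K V) := by
  have hdet : LinearMap.det (T * S) = (-1) ^ finrank K V * LinearMap.det (T * S) :=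
    calc LinearMap.det (T * S) = LinearMap.det ((-1 : K) • (S * T)) := by rw [h, neg_one_smul]
      _ = (-1) ^ finrank K V * LinearMap.det (T * S) := by
        rw [LinearMap.det_smul, map_mul, map_mul, mul_comm (LinearMap.det S)]
  have hne : LinearMap.det (T * S) ≠ 0 := (LinearMap.isUnit_det _ (hT.mul hS)).ne_zero
  rw [← neg_one_pow_eq_one_iff_even (Ring.neg_one_ne_one_of_char_ne_two hK)]
  exact (mul_eq_right₀ hne).mp hdet.symm

theorem even_finrank_of_mapsTo [FiniteDimensional K V] (hK : ringChar K ≠ 2) {T S : End K V}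
    (hT : T * T = 1) (hS : Function.Injective S) (h : T * S = -(S * T)) {p : Submodule K V}
    (hTp : MapsTo T p p) (hSp : MapsTo S p p) : Even (finrank K p) := by
  refine even_finrank_of_mul_eq_neg_mul hK (T := T.restrict hTp) (S := S.restrict hSp) ?_ ?_ ?_
  · refine .of_mul_eq_one (T.restrict hTp) ?_
    ext x
    exact congr($hT x)
  · have hinj : Function.Injective (S.restrict hSp) := fun x y hxy ↦
      Subtype.ext (hS congr(($hxy : V)))
    exact (isUnit_iff _).mpr ⟨hinj, LinearMap.injective_iff_surjective.mp hinj⟩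
  · ext x
    exact congr($h x)

end Module.End

open Module.End in
theorem statement15_general (V : Type) [AddCommGroup V] [Module ℂ V]
    [FiniteDimensional ℂ V]
    (H U W : V →ₗ[ℂ] V)
    (hU2 : U ∘ₗ U = LinearMap.id)
    (hWbij : Function.Bijective W)
    (hHU : H ∘ₗ U = U ∘ₗ H)
    (hHW : H ∘ₗ W = W ∘ₗ H)
    (hUW : U ∘ₗ W = -(W ∘ₗ U)) :
    ∀ μ : ℂ,
      Even (Module.finrank ℂ ↥(LinearMap.ker (H - μ • LinearMap.id))) ∧
      ((∃ ψ : V, ψ ≠ 0 ∧ H ψ = μ • ψ) →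
        2 ≤ Module.finrank ℂ ↥(LinearMap.ker (H - μ • LinearMap.id))) := by
  intro μ
  have heven : Even (Module.finrank ℂ (eigenspace H μ)) :=
    even_finrank_of_mapsTo (by simp [ringChar.eq_zero]) hU2 hWbij.injective hUW
      (mapsTo_genEigenspace_of_comm hHU μ 1) (mapsTo_genEigenspace_of_comm hHW μ 1)
  rw [show LinearMap.ker (H - μ • LinearMap.id) = eigenspace H μ from eigenspace_def.symm]
  refine ⟨heven, fun ⟨ψ, hψ, hHψ⟩ ↦ ?_⟩
  have hne : eigenspace H μ ≠ ⊥ :=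
    (Submodule.ne_bot_iff _).mpr ⟨ψ, mem_eigenspace_iff.mpr hHψ, hψ⟩
  have hpos : 1 ≤ Module.finrank ℂ (eigenspace H μ) := Submodule.one_le_finrank_iff.mpr hne
  obtain ⟨k, hk⟩ := heven
  omega

/-- if `U² = id`, `W` is bijective, `H` commutes with `U` and `W`, and
`U W = - W U`, then every eigenspace of `H` has even dimension; in particular, every
eigenvalue of `H` has eigenspace of dimension at least `2`. -/
theorem statement15 (V : Type) [AddCommGroup V] [Module ℂ V]
    [FiniteDimensional ℂ V] [Nontrivial V]
    (H U W : V →ₗ[ℂ] V)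
    (hU2 : U ∘ₗ U = LinearMap.id)
    (hWbij : Function.Bijective W)
    (hHU : H ∘ₗ U = U ∘ₗ H)
    (hHW : H ∘ₗ W = W ∘ₗ H)
    (hUW : U ∘ₗ W = -(W ∘ₗ U)) :
    ∀ μ : ℂ,
      Even (Module.finrank ℂ ↥(LinearMap.ker (H - μ • LinearMap.id))) ∧
      ((∃ ψ : V, ψ ≠ 0 ∧ H ψ = μ • ψ) →
        2 ≤ Module.finrank ℂ ↥(LinearMap.ker (H - μ • LinearMap.id))) :=
  statement15_general V H U W hU2 hWbij hHU hHW hUW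
end

section
/- Let V be a finite-dimensional complex vector space, n a natural number, H : V → V a linear map, and U_1, …, U_n, W_1, …, W_n : V → V linear maps satisfying: U_k ∘ U_k = id for each k; the U_k pairwise commute; each U_k commutes with H; each W_k is bijective and commutes with H; U_k ∘ W_k = − W_k ∘ U_k for each k; and U_j ∘ W_k = W_k ∘ U_j whenever j ≠ k. Then for every μ ∈ ℂ, 2^n divides the dimension of ker(H − μ·id); in particular, every nonzero eigenspace of H has dimension at least 2^n. -/
/-!
Restrict everything to the eigenspace `E` of `H`, which all `U k` and `W k` preserve. On `E`, the
involution `U 0` splits `E` into its `±1`-eigenspaces, and `W 0`, anticommuting with `U 0`, embeds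
each of them into the other, so they have the same dimension and `dim E = 2 · dim E₊`. The
remaining `U k`, `W k` (`k ≠ 0`) commute with `U 0`, hence preserve `E₊` and satisfy the same
relations there with one index fewer; induction on `n` gives `2 ^ n ∣ dim E`.
-/

open Module

namespace Module.End

variable {K V : Type*} [Field K] [AddCommGroup V] [Module K V] {u w : End K V}

theorem isCompl_eigenspace_one_eigenspace_neg_one [NeZero (2 : K)] (hu : u * u = 1) :
    IsCompl (u.eigenspace 1) (u.eigenspace (-1)) := by
  have hu' (x : V) : u (u x) = x := LinearMap.congr_fun hu x
  constructor
  · rw [Submodule.disjoint_def]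
    intro x hx₁ hx₂
    rw [mem_eigenspace_iff, one_smul] at hx₁
    rw [mem_eigenspace_iff, neg_one_smul, hx₁] at hx₂
    have h2x : (2 : K) • x = 0 := by rw [two_smul]; nth_rw 1 [hx₂]; exact neg_add_cancel x
    exact (smul_eq_zero.mp h2x).resolve_left two_ne_zero
  · rw [codisjoint_iff, eq_top_iff]
    intro x _
    have hx : x = (2⁻¹ : K) • (x + u x) + (2⁻¹ : K) • (x - u x) := by
      rw [← smul_add, add_add_sub_cancel, ← two_smul K, smul_smul,
        inv_mul_cancel₀ two_ne_zero, one_smul]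
    rw [hx]
    refine Submodule.add_mem_sup (Submodule.smul_mem _ _ ?_) (Submodule.smul_mem _ _ ?_)
    · rw [mem_eigenspace_iff, map_add, hu', one_smul, add_comm]
    · rw [mem_eigenspace_iff, map_sub, hu', neg_one_smul, neg_sub]

theorem mapsTo_eigenspace_neg_of_anticommute (huw : u * w = -(w * u)) (μ : K) :
    Set.MapsTo w (u.eigenspace μ) (u.eigenspace (-μ)) := by
  intro x hx
  rw [SetLike.mem_coe, mem_eigenspace_iff] at hx ⊢
  rw [← mul_apply, huw, LinearMap.neg_apply, mul_apply, hx, map_smul, neg_smul]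

theorem rank_le_of_injective_of_mapsTo (hw : Function.Injective w) {p q : Submodule K V}
    (hpq : Set.MapsTo w p q) : Module.rank K p ≤ Module.rank K q :=
  LinearMap.rank_le_of_injective (w.restrict hpq) fun _ _ hxy ↦
    Subtype.ext (hw (congrArg Subtype.val hxy))

theorem rank_eigenspace_neg_eq_of_anticommute (hw : Function.Injective w) (huw : u * w = -(w * u))
    (μ : K) : Module.rank K (u.eigenspace (-μ)) = Module.rank K (u.eigenspace μ) := by
  have hle (ν : K) : Module.rank K (u.eigenspace ν) ≤ Module.rank K (u.eigenspace (-ν)) :=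
    rank_le_of_injective_of_mapsTo hw (mapsTo_eigenspace_neg_of_anticommute huw ν)
  have hle' := hle (-μ)
  rw [neg_neg] at hle'
  exact hle'.antisymm (hle μ)

theorem finrank_eq_two_mul_finrank_eigenspace_one [NeZero (2 : K)] (hu : u * u = 1)
    (hw : Function.Injective w) (huw : u * w = -(w * u)) :
    finrank K V = 2 * finrank K (u.eigenspace 1) := by
  have hrank : Module.rank K V = 2 * Module.rank K (u.eigenspace 1) := by
    have hcompl := isCompl_eigenspace_one_eigenspace_neg_one hu
    rw [← (Submodule.prodEquivOfIsCompl _ _ hcompl).rank_eq,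
      rank_prod', rank_eigenspace_neg_eq_of_anticommute hw huw, two_mul]
  rw [finrank, hrank, Cardinal.toNat_mul, Cardinal.toNat_ofNat]
  rfl

end Module.End

open Module.End

structure IsFlipFamily {K V : Type*} [Field K] [AddCommGroup V] [Module K V] {n : ℕ}
    (U W : Fin n → Module.End K V) : Prop where
  mul_self : ∀ k, U k * U k = 1
  commute : ∀ j k, Commute (U j) (U k)
  injective : ∀ k, Function.Injective (W k)
  anticommute : ∀ k, U k * W k = -(W k * U k)
  commute_of_ne : ∀ j k, j ≠ k → Commute (U j) (W k)

namespace IsFlipFamily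

variable {K V : Type*} [Field K] [AddCommGroup V] [Module K V] {n : ℕ}
  {U W : Fin n → Module.End K V}

theorem restrict (h : IsFlipFamily U W) {p : Submodule K V} (hU : ∀ k, Set.MapsTo (U k) p p)
    (hW : ∀ k, Set.MapsTo (W k) p p) :
    IsFlipFamily (fun k ↦ (U k).restrict (hU k)) (fun k ↦ (W k).restrict (hW k)) where
  mul_self k := by ext x; exact LinearMap.congr_fun (h.mul_self k) x
  commute j k := LinearMap.restrict_commute (h.commute j k) _ _
  injective k _ _ hxy := Subtype.ext (h.injective k (congrArg Subtype.val hxy))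
  anticommute k := by ext x; exact LinearMap.congr_fun (h.anticommute k) x
  commute_of_ne j k hjk := LinearMap.restrict_commute (h.commute_of_ne j k hjk) _ _

theorem tail {U W : Fin (n + 1) → Module.End K V} (h : IsFlipFamily U W) :
    IsFlipFamily (fun k : Fin n ↦ U k.succ) (fun k ↦ W k.succ) where
  mul_self k := h.mul_self k.succ
  commute j k := h.commute j.succ k.succ
  injective k := h.injective k.succ
  anticommute k := h.anticommute k.succ
  commute_of_ne j k hjk := h.commute_of_ne j.succ k.succ (Fin.succ_injective n |>.ne hjk)

theorem two_pow_dvd_finrank [NeZero (2 : K)] (h : IsFlipFamily U W) : 2 ^ n ∣ finrank K V := by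
  induction n generalizing V with
  | zero => simp
  | succ n ih =>
    have hplus := ih <| h.tail.restrict (p := (U 0).eigenspace 1)
      (fun k ↦ mapsTo_genEigenspace_of_comm (h.commute 0 k.succ) 1 1)
      (fun k ↦ mapsTo_genEigenspace_of_comm
        (h.commute_of_ne 0 k.succ (Fin.succ_ne_zero k).symm) 1 1)
    rw [finrank_eq_two_mul_finrank_eigenspace_one (h.mul_self 0) (h.injective 0)
      (h.anticommute 0), pow_succ']
    exact mul_dvd_mul_left 2 hplus

end IsFlipFamily

/-- given commuting involutions `U k` and bijections `W k` as in the
statement, `2^n` divides the dimension of every eigenspace of `H`; in particular every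
nonzero eigenspace of `H` has dimension at least `2^n`. -/
theorem statement16 (V : Type) [AddCommGroup V] [Module ℂ V] [FiniteDimensional ℂ V]
    (n : ℕ) (H : V →ₗ[ℂ] V) (U W : Fin n → (V →ₗ[ℂ] V))
    (hU2 : ∀ k, U k ∘ₗ U k = LinearMap.id)
    (hUcomm : ∀ j k, U j ∘ₗ U k = U k ∘ₗ U j)
    (hUH : ∀ k, H ∘ₗ U k = U k ∘ₗ H)
    (hWbij : ∀ k, Function.Bijective (W k))
    (hWH : ∀ k, H ∘ₗ W k = W k ∘ₗ H)
    (hUW : ∀ k, U k ∘ₗ W k = -(W k ∘ₗ U k))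
    (hUWcomm : ∀ j k, j ≠ k → U j ∘ₗ W k = W k ∘ₗ U j) :
    ∀ μ : ℂ,
      2 ^ n ∣ Module.finrank ℂ ↥(LinearMap.ker (H - μ • LinearMap.id)) ∧
      (LinearMap.ker (H - μ • LinearMap.id) ≠ ⊥ →
        2 ^ n ≤ Module.finrank ℂ ↥(LinearMap.ker (H - μ • LinearMap.id))) := by
  intro μ
  have hfamily : IsFlipFamily U W :=
    ⟨hU2, hUcomm, fun k ↦ (hWbij k).injective, hUW, hUWcomm⟩
  rw [show LinearMap.ker (H - μ • LinearMap.id) = eigenspace H μ from eigenspace_def.symm]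
  have hdvd := (hfamily.restrict (fun k ↦ mapsTo_genEigenspace_of_comm (hUH k) μ 1)
    (fun k ↦ mapsTo_genEigenspace_of_comm (hWH k) μ 1)).two_pow_dvd_finrank
  exact ⟨hdvd, fun hE ↦ Nat.le_of_dvd (Submodule.one_le_finrank_iff.mpr hE) hdvd⟩
end

section
/- Let Nx, Ny, T, and the cross vectors χ_{i,j} be as in the context. Then the ZMod 2-linear span of {χ_{i,j} : (i, j) ∈ T, j odd} inside the space of functions T → ZMod 2 has ZMod 2-dimension exactly Nx·Ny/2 − 2. -/
noncomputable section

/-- The indicator function (valued in `ZMod 2`) of a single site of the torus. -/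
def siteInd {Nx Ny : ℕ} (p : ZMod Nx × ZMod Ny) : ZMod Nx × ZMod Ny → ZMod 2 :=
  fun q => if q = p then 1 else 0

/-- The cross vector `χ_{i,j}`: the `ZMod 2` sum of the indicator functions of the five
sites `(i, j-1), (i-1, j), (i, j), (i+1, j), (i, j+1)`. -/
def cross {Nx Ny : ℕ} (p : ZMod Nx × ZMod Ny) : ZMod Nx × ZMod Ny → ZMod 2 :=
  siteInd (p.1, p.2 - 1) + siteInd (p.1 - 1, p.2) + siteInd p +
    siteInd (p.1 + 1, p.2) + siteInd (p.1, p.2 + 1)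

/-!
Extend a combination `c` of the odd-row crosses by zero to the whole torus; the combination is
then, at every site, the sum of `c` over the cross around that site. Evaluated on an even row
this says `c (i, j - 1) = c (i, j + 1)`, so `c` is the same function `d` of `i` on every odd
row; evaluated on an odd row it says `d (i - 1) + d i + d (i + 1) = 0`. So the relations among
the `Nx * Ny / 2` odd-row crosses are the solutions of this recurrence on `ZMod Nx`, which for
`3 ∣ Nx` are the 3-periodic extensions of `(a, b, a + b)`: a 2-dimensional space.
-/

namespace ZMod

variable {n : ℕ} [NeZero n]

theorem odd_val_iff_castHom_eq_one (h2 : 2 ∣ n) (j : ZMod n) :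
    Odd j.val ↔ castHom h2 (ZMod 2) j = 1 := by
  rw [castHom_apply, cast_eq_val, natCast_eq_one_iff_odd]

theorem odd_val_add_one_iff (h2 : 2 ∣ n) (j : ZMod n) : Odd (j + 1).val ↔ ¬ Odd j.val := by
  simp only [odd_val_iff_castHom_eq_one h2, map_add, map_one]
  generalize castHom h2 (ZMod 2) j = x
  revert x; decide

theorem odd_val_sub_one_iff (h2 : 2 ∣ n) (j : ZMod n) : Odd (j - 1).val ↔ ¬ Odd j.val := by
  simp only [odd_val_iff_castHom_eq_one h2, map_sub, map_one]
  generalize castHom h2 (ZMod 2) j = x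
  revert x; decide

theorem odd_val_one (h2 : 2 ∣ n) : Odd (1 : ZMod n).val := by
  rw [odd_val_iff_castHom_eq_one h2, map_one]

end ZMod

variable {Nx Ny : ℕ}

theorem sum_smul_siteInd_add_apply [NeZero Nx] [NeZero Ny] (f : ZMod Nx × ZMod Ny → ZMod 2)
    (v q : ZMod Nx × ZMod Ny) : (∑ p, f p • siteInd (p + v)) q = f (q - v) := by
  have hsite (p : ZMod Nx × ZMod Ny) : q = p + v ↔ p = q - v := by
    rw [eq_sub_iff_add_eq, eq_comm]
  simp only [Finset.sum_apply, Pi.smul_apply, siteInd, smul_eq_mul, mul_ite, mul_one, mul_zero,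
    hsite, Finset.sum_ite_eq', Finset.mem_univ, if_true]

theorem cross_eq (p : ZMod Nx × ZMod Ny) :
    cross p = siteInd (p + (0, -1)) + siteInd (p + (-1, 0)) + siteInd (p + 0) +
      siteInd (p + (1, 0)) + siteInd (p + (0, 1)) := by
  obtain ⟨i, j⟩ := p
  simp [cross, sub_eq_add_neg]

theorem sum_smul_cross_apply [NeZero Nx] [NeZero Ny] (f : ZMod Nx × ZMod Ny → ZMod 2)
    (q : ZMod Nx × ZMod Ny) : (∑ p, f p • cross p) q =
      f (q.1, q.2 + 1) + f (q.1 + 1, q.2) + f q + f (q.1 - 1, q.2) + f (q.1, q.2 - 1) := by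
  simp only [cross_eq, smul_add, Finset.sum_add_distrib, Pi.add_apply, sum_smul_siteInd_add_apply]
  obtain ⟨i, j⟩ := q
  simp [sub_eq_add_neg]

section TripleSum

variable (N : ℕ)

def tripleSum : (ZMod N → ZMod 2) →ₗ[ZMod 2] (ZMod N → ZMod 2) :=
  LinearMap.funLeft _ _ (· - 1) + LinearMap.id + LinearMap.funLeft _ _ (· + 1)

variable {N}

theorem mem_ker_tripleSum {d : ZMod N → ZMod 2} :
    d ∈ LinearMap.ker (tripleSum N) ↔ ∀ i, d (i - 1) + d i + d (i + 1) = 0 := by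
  simp [tripleSum, funext_iff]

theorem eq_zero_of_mem_ker_tripleSum [NeZero N] {d : ZMod N → ZMod 2}
    (hd : d ∈ LinearMap.ker (tripleSum N)) (h0 : d 0 = 0) (h1 : d 1 = 0) : d = 0 := by
  rw [mem_ker_tripleSum] at hd
  have hnat (n : ℕ) : d n = 0 ∧ d (n + 1) = 0 := by
    induction n with
    | zero => simpa using ⟨h0, h1⟩
    | succ n ih =>
      refine ⟨by exact_mod_cast ih.2, ?_⟩
      have h := hd (n + 1)
      rw [add_sub_cancel_right, ih.1, ih.2, zero_add, zero_add] at h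
      exact_mod_cast h
  funext i
  rw [← ZMod.natCast_zmod_val i]
  exact (hnat i.val).1

theorem exists_mem_ker_tripleSum (h3 : 3 ∣ N) (a b : ZMod 2) :
    ∃ d ∈ LinearMap.ker (tripleSum N), d 0 = a ∧ d 1 = b := by
  let e : ZMod 3 → ZMod 2 := ![a, b, a + b]
  have he : ∀ r : ZMod 3, e (r - 1) + e r + e (r + 1) = 0 := by
    revert a b; decide
  refine ⟨e ∘ ZMod.castHom h3 (ZMod 3), mem_ker_tripleSum.mpr fun i => ?_,
    by simp only [Function.comp_apply, map_zero]; rfl,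
    by simp only [Function.comp_apply, map_one]; rfl⟩
  simpa only [Function.comp_apply, map_sub, map_add, map_one] using he (ZMod.castHom h3 _ i)

theorem finrank_ker_tripleSum [NeZero N] (h3 : 3 ∣ N) :
    Module.finrank (ZMod 2) (LinearMap.ker (tripleSum N)) = 2 := by
  let ev : LinearMap.ker (tripleSum N) →ₗ[ZMod 2] ZMod 2 × ZMod 2 :=
    (LinearMap.proj 0).prod (LinearMap.proj 1) ∘ₗ (LinearMap.ker (tripleSum N)).subtype
  have hev : Function.Bijective ev := by
    refine ⟨(injective_iff_map_eq_zero ev).mpr fun d hd => ?_, fun ⟨a, b⟩ => ?_⟩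
    · obtain ⟨h0, h1⟩ := Prod.ext_iff.mp hd
      exact Subtype.ext (eq_zero_of_mem_ker_tripleSum d.2 h0 h1)
    · obtain ⟨d, hd, h0, h1⟩ := exists_mem_ker_tripleSum h3 a b
      exact ⟨⟨d, hd⟩, Prod.ext h0 h1⟩
  rw [(LinearEquiv.ofBijective ev hev).finrank_eq]
  simp

end TripleSum

section OddRows

variable (Nx Ny)

def oddCrossComb [NeZero Nx] [NeZero Ny] :
    ({p : ZMod Nx × ZMod Ny // Odd p.2.val} → ZMod 2) →ₗ[ZMod 2] (ZMod Nx × ZMod Ny → ZMod 2) :=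
  Fintype.linearCombination (ZMod 2) fun p => cross p.1

def oddExtend (c : {p : ZMod Nx × ZMod Ny // Odd p.2.val} → ZMod 2) :
    ZMod Nx × ZMod Ny → ZMod 2 :=
  fun p => if h : Odd p.2.val then c ⟨p, h⟩ else 0

variable {Nx Ny}

theorem oddExtend_of_odd (c : {p : ZMod Nx × ZMod Ny // Odd p.2.val} → ZMod 2)
    {i : ZMod Nx} {j : ZMod Ny} (hj : Odd j.val) : oddExtend Nx Ny c (i, j) = c ⟨(i, j), hj⟩ :=
  dif_pos hj

theorem oddExtend_of_not_odd (c : {p : ZMod Nx × ZMod Ny // Odd p.2.val} → ZMod 2)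
    {i : ZMod Nx} {j : ZMod Ny} (hj : ¬ Odd j.val) : oddExtend Nx Ny c (i, j) = 0 :=
  dif_neg hj

variable [NeZero Nx] [NeZero Ny]

theorem range_oddCrossComb : LinearMap.range (oddCrossComb Nx Ny) =
    Submodule.span (ZMod 2) {w | ∃ p : ZMod Nx × ZMod Ny, Odd p.2.val ∧ w = cross p} := by
  rw [oddCrossComb, Fintype.range_linearCombination]
  congr 1
  ext w
  simp [eq_comm]

theorem card_oddSites (h2 : 2 ∣ Ny) :
    Fintype.card {p : ZMod Nx × ZMod Ny // Odd p.2.val} = Nx * Ny / 2 := by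
  have hshift :
      {p : ZMod Nx × ZMod Ny // ¬ Odd p.2.val} ≃ {p : ZMod Nx × ZMod Ny // Odd p.2.val} :=
    (Equiv.addRight (0, 1)).subtypeEquiv fun p => (ZMod.odd_val_add_one_iff h2 p.2).symm
  have hcompl := Fintype.card_subtype_compl fun p : ZMod Nx × ZMod Ny => Odd p.2.val
  have hle := Fintype.card_subtype_le fun p : ZMod Nx × ZMod Ny => Odd p.2.val
  rw [Fintype.card_congr hshift, Fintype.card_prod, ZMod.card, ZMod.card] at hcompl
  rw [Fintype.card_prod, ZMod.card, ZMod.card] at hle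
  omega

theorem oddCrossComb_apply
    (c : {p : ZMod Nx × ZMod Ny // Odd p.2.val} → ZMod 2) (q : ZMod Nx × ZMod Ny) :
    oddCrossComb Nx Ny c q =
      oddExtend Nx Ny c (q.1, q.2 + 1) + oddExtend Nx Ny c (q.1 + 1, q.2) + oddExtend Nx Ny c q +
        oddExtend Nx Ny c (q.1 - 1, q.2) + oddExtend Nx Ny c (q.1, q.2 - 1) := by
  have hsum : oddCrossComb Nx Ny c = ∑ p, oddExtend Nx Ny c p • cross p := by
    rw [← Fintype.sum_subtype_add_sum_subtype fun p : ZMod Nx × ZMod Ny => Odd p.2.val]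
    have hodd (x : {p : ZMod Nx × ZMod Ny // Odd p.2.val}) : oddExtend Nx Ny c x = c x :=
      oddExtend_of_odd c x.2
    have heven (x : {p : ZMod Nx × ZMod Ny // ¬ Odd p.2.val}) : oddExtend Nx Ny c x = 0 :=
      oddExtend_of_not_odd c x.2
    simp only [hodd, heven, zero_smul, Finset.sum_const_zero, add_zero]
    rfl
  rw [hsum, sum_smul_cross_apply]

end OddRows

section Kernel

variable (Nx Ny)

def rowLift : LinearMap.ker (tripleSum Nx) →ₗ[ZMod 2]
    ({p : ZMod Nx × ZMod Ny // Odd p.2.val} → ZMod 2) :=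
  LinearMap.funLeft _ _ (fun p => p.1.1) ∘ₗ (LinearMap.ker (tripleSum Nx)).subtype

variable {Nx Ny}

theorem rowLift_injective [NeZero Ny] (h2 : 2 ∣ Ny) : Function.Injective (rowLift Nx Ny) := by
  intro d e hde
  ext i
  exact congrFun hde ⟨(i, 1), ZMod.odd_val_one h2⟩

theorem oddExtend_rowLift (d : LinearMap.ker (tripleSum Nx)) (p : ZMod Nx × ZMod Ny) :
    oddExtend Nx Ny (rowLift Nx Ny d) p = if Odd p.2.val then d.1 p.1 else 0 := by
  simp [oddExtend, rowLift, LinearMap.funLeft]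

variable [NeZero Nx] [NeZero Ny]

theorem rowLift_mem_ker (h2 : 2 ∣ Ny) (d : LinearMap.ker (tripleSum Nx)) :
    rowLift Nx Ny d ∈ LinearMap.ker (oddCrossComb Nx Ny) := by
  rw [LinearMap.mem_ker]
  funext q
  simp only [oddCrossComb_apply, oddExtend_rowLift, Pi.zero_apply]
  by_cases hq : Odd q.2.val
  · simp only [hq, ZMod.odd_val_add_one_iff h2, ZMod.odd_val_sub_one_iff h2, if_true, if_false,
      not_true_eq_false]
    linear_combination mem_ker_tripleSum.mp d.2 q.1
  · simp only [hq, ZMod.odd_val_add_one_iff h2, ZMod.odd_val_sub_one_iff h2, if_true, if_false,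
      not_false_eq_true]
    linear_combination CharTwo.add_self_eq_zero (d.1 q.1)

theorem oddExtend_periodic (h2 : 2 ∣ Ny) {c : {p : ZMod Nx × ZMod Ny // Odd p.2.val} → ZMod 2}
    (hc : c ∈ LinearMap.ker (oddCrossComb Nx Ny)) (i : ZMod Nx) :
    Function.Periodic (fun j => oddExtend Nx Ny c (i, j)) 2 := by
  intro j
  have hsum := congrFun hc (i, j + 1)
  simp only [oddCrossComb_apply, Pi.zero_apply] at hsum
  by_cases hj : Odd (j + 1).val
  · have hj0 : ¬ Odd j.val := (ZMod.odd_val_add_one_iff h2 j).mp hj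
    have hj2 : ¬ Odd (j + 2).val := by
      rwa [← one_add_one_eq_two, ← add_assoc, ZMod.odd_val_add_one_iff h2, not_not]
    simp only [oddExtend_of_not_odd c hj0, oddExtend_of_not_odd c hj2]
  · simp only [oddExtend_of_not_odd c hj, add_zero, add_sub_cancel_right, add_assoc,
      one_add_one_eq_two] at hsum
    dsimp only
    exact CharTwo.add_eq_zero.mp hsum

theorem mem_range_rowLift (h2 : 2 ∣ Ny) {c : {p : ZMod Nx × ZMod Ny // Odd p.2.val} → ZMod 2}
    (hc : c ∈ LinearMap.ker (oddCrossComb Nx Ny)) : c ∈ LinearMap.range (rowLift Nx Ny) := by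
  let d : ZMod Nx → ZMod 2 := fun i => oddExtend Nx Ny c (i, 1)
  have hd : d ∈ LinearMap.ker (tripleSum Nx) := mem_ker_tripleSum.mpr fun i => by
    have hsum := congrFun hc (i, 1)
    have h1 : ¬ Odd ((1 : ZMod Ny) + 1).val := fun h =>
      (ZMod.odd_val_add_one_iff h2 1).mp h (ZMod.odd_val_one h2)
    have h0 : ¬ Odd ((1 : ZMod Ny) - 1).val := fun h =>
      (ZMod.odd_val_sub_one_iff h2 1).mp h (ZMod.odd_val_one h2)
    simp only [oddCrossComb_apply, Pi.zero_apply, oddExtend_of_not_odd c h1,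
      oddExtend_of_not_odd c h0] at hsum
    linear_combination hsum
  refine ⟨⟨d, hd⟩, funext fun ⟨p, hp⟩ => ?_⟩
  obtain ⟨m, hm⟩ := id hp
  have hp2 : p.2 = 1 + (m : ZMod Ny) * 2 := by
    rw [← ZMod.natCast_zmod_val p.2, hm]
    push_cast
    ring
  calc oddExtend Nx Ny c (p.1, 1)
      = oddExtend Nx Ny c (p.1, 1 + (m : ZMod Ny) * 2) :=
        ((oddExtend_periodic h2 hc p.1).nat_mul _ 1).symm
    _ = c ⟨p, hp⟩ := by rw [← hp2]; exact oddExtend_of_odd c hp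

theorem range_rowLift (h2 : 2 ∣ Ny) :
    LinearMap.range (rowLift Nx Ny) = LinearMap.ker (oddCrossComb Nx Ny) :=
  le_antisymm (by rintro _ ⟨d, rfl⟩; exact rowLift_mem_ker h2 d)
    fun _ hc => mem_range_rowLift h2 hc

theorem finrank_ker_oddCrossComb (h3 : 3 ∣ Nx) (h2 : 2 ∣ Ny) :
    Module.finrank (ZMod 2) (LinearMap.ker (oddCrossComb Nx Ny)) = 2 := by
  rw [← range_rowLift h2, LinearMap.finrank_range_of_inj (rowLift_injective h2),
    finrank_ker_tripleSum h3]

end Kernel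

theorem statement19_general (Nx Ny : ℕ) [NeZero Nx] [NeZero Ny]
    (h3 : 3 ∣ Nx) (hNy2 : Even Ny) :
    Module.finrank (ZMod 2)
      ↥(Submodule.span (ZMod 2)
          {w : ZMod Nx × ZMod Ny → ZMod 2 |
            ∃ p : ZMod Nx × ZMod Ny, Odd p.2.val ∧ w = cross p}) =
      Nx * Ny / 2 - 2 := by
  have h2 : 2 ∣ Ny := hNy2.two_dvd
  have hrank := (oddCrossComb Nx Ny).finrank_range_add_finrank_ker
  rw [range_oddCrossComb, finrank_ker_oddCrossComb h3 h2, Module.finrank_fintype_fun_eq_card,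
    card_oddSites h2] at hrank
  omega

/-- the `ZMod 2`-span of the odd-row cross vectors `χ_{i,j}` (`j` odd)
has dimension exactly `Nx·Ny/2 - 2`. -/
theorem statement19 (Nx Ny : ℕ) [NeZero Nx] [NeZero Ny]
    (h3 : 3 ∣ Nx) (hNx : 3 ≤ Nx) (hNy2 : Even Ny) (hNy4 : 4 ≤ Ny) :
    Module.finrank (ZMod 2)
      ↥(Submodule.span (ZMod 2)
          {w : ZMod Nx × ZMod Ny → ZMod 2 |
            ∃ p : ZMod Nx × ZMod Ny, Odd p.2.val ∧ w = cross p}) =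
      Nx * Ny / 2 - 2 :=
  statement19_general Nx Ny h3 hNy2
end
end
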